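/- arXiv:1601.00809 — 4 statements merged into one kernel-verified Lean document; each statement's English description precedes it below -/
import Mathlib

section
/- Let (K, K^∨) be a pair of dual reflexive Gorenstein cones of index k with deg^∨ = t_1 + ⋯ + t_k where each t_i ∈ K^∨_(1), and for 1 ≤ i ≤ k set Δ_i = {x ∈ K : ⟨x, t_j⟩ = δ_{ij} for all 1 ≤ j ≤ k}. Then K is exactly the set of all finite nonnegative real linear combinations of elements of Δ_1 ∪ ⋯ ∪ Δ_k. -/
/-! Every generator `v` of `K` is a lattice point with `⟨v, deg^∨⟩ = 1`, so the numbers `⟨v, t_j⟩`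
are nonnegative integers summing to `1`: exactly one of them equals `1`, i.e. `v ∈ Δ_i` for some `i`.
Hence the cone hull of `Δ_1 ∪ ⋯ ∪ Δ_k` contains the generators of `K`, and it is contained in `K`. -/

open scoped BigOperators Pointwise

noncomputable section

/-- The standard pairing `⟨x, y⟩ = ∑ i, x i * y i` on `ℝ^d`. -/
def pairR {d : ℕ} (x y : Fin d → ℝ) : ℝ := ∑ i, x i * y i

/-- A point of `ℝ^d` is a lattice point if all of its coordinates are integers. -/
def IsLatticePoint {d : ℕ} (x : Fin d → ℝ) : Prop := ∀ i, ∃ z : ℤ, x i = (z : ℝ)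

/-- The dual cone `K^∨ = {y : ⟨x, y⟩ ≥ 0 for all x ∈ K}`. -/
def dualCone {d : ℕ} (K : Set (Fin d → ℝ)) : Set (Fin d → ℝ) :=
  { y | ∀ x ∈ K, 0 ≤ pairR x y }

/-- A Gorenstein cone with degree element `n` (a lattice point): the set of all
nonnegative real linear combinations of a finite set of lattice points, each pairing
to `1` with `n`, such that `K ∩ (−K) = {0}` and `span K = ℝ^d`. -/
def IsGorensteinCone {d : ℕ} (K : Set (Fin d → ℝ)) (n : Fin d → ℝ) : Prop :=
  IsLatticePoint n ∧
  (∃ S : Finset (Fin d → ℝ),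
      (∀ v ∈ S, IsLatticePoint v ∧ pairR v n = 1) ∧
      K = { x | ∃ c : (Fin d → ℝ) → ℝ, (∀ v, 0 ≤ c v) ∧ x = ∑ v ∈ S, c v • v }) ∧
  K ∩ (-K) = {0} ∧
  Submodule.span ℝ K = ⊤

/-- `K_(1)`: the lattice points `m ∈ K` with `⟨m, deg^∨⟩ = 1`. -/
def Kone {d : ℕ} (K : Set (Fin d → ℝ)) (degVee : Fin d → ℝ) : Set (Fin d → ℝ) :=
  { m | IsLatticePoint m ∧ m ∈ K ∧ pairR m degVee = 1 }

/-- `K^∨_(1)`: the lattice points `n ∈ K^∨` with `⟨deg, n⟩ = 1`. -/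
def KvOne {d : ℕ} (K : Set (Fin d → ℝ)) (deg : Fin d → ℝ) : Set (Fin d → ℝ) :=
  { n | IsLatticePoint n ∧ n ∈ dualCone K ∧ pairR deg n = 1 }

namespace PointedCone

variable {R E : Type*} [Semiring R] [PartialOrder R] [IsOrderedRing R]
  [AddCommMonoid E] [Module R E]

lemma mem_hull_iff_exists_fin {s : Set E} {x : E} :
    x ∈ hull R s ↔ ∃ (n : ℕ) (c : Fin n → R) (p : Fin n → E),
      (∀ a, 0 ≤ c a) ∧ (∀ a, p a ∈ s) ∧ x = ∑ a, c a • p a := by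
  rw [Submodule.mem_span_set']
  constructor
  · rintro ⟨n, c, p, rfl⟩
    exact ⟨n, fun a => c a, fun a => p a, fun a => (c a).2, fun a => (p a).2, rfl⟩
  · rintro ⟨n, c, p, hc, hp, rfl⟩
    exact ⟨n, fun a => ⟨c a, hc a⟩, fun a => ⟨p a, hp a⟩, rfl⟩

lemma mem_hull_finset_iff {S : Finset E} {x : E} :
    x ∈ hull R (S : Set E) ↔ ∃ c : E → R, (∀ v, 0 ≤ c v) ∧ x = ∑ v ∈ S, c v • v := by
  constructor
  · intro hx
    obtain ⟨c, -, rfl⟩ := Submodule.mem_span_finset.1 hx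
    exact ⟨fun v => c v, fun v => (c v).2, rfl⟩
  · rintro ⟨c, hc, rfl⟩
    exact Submodule.sum_mem _ fun v hv =>
      Submodule.smul_mem _ ⟨c v, hc v⟩ (subset_hull (Finset.mem_coe.2 hv))

end PointedCone

lemma exists_eq_ite_of_sum_eq_one {R ι : Type*} [CommRing R] [LinearOrder R]
    [IsStrictOrderedRing R] [Fintype ι] [DecidableEq ι] {f : ι → R} (hf₀ : ∀ j, 0 ≤ f j)
    (hfℤ : ∀ j, ∃ z : ℤ, f j = z) (hsum : ∑ j, f j = 1) :
    ∃ i, ∀ j, f j = if i = j then 1 else 0 := by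
  obtain ⟨i, hi⟩ : ∃ i, f i ≠ 0 := by
    by_contra! h
    simp [h] at hsum
  have hi₁ : 1 ≤ f i := by
    obtain ⟨z, hz⟩ := hfℤ i
    have hz₀ : (0 : R) ≤ z := hz ▸ hf₀ i
    have : 0 < z := lt_of_le_of_ne (by exact_mod_cast hz₀) (by rintro rfl; simp [hz] at hi)
    rw [hz]
    exact_mod_cast (by omega : 1 ≤ z)
  rw [← Finset.add_sum_erase _ _ (Finset.mem_univ i)] at hsum
  have hrest : ∑ j ∈ Finset.univ.erase i, f j = 0 := by
    have := Finset.sum_nonneg fun j (_ : j ∈ Finset.univ.erase i) => hf₀ j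
    linarith
  refine ⟨i, fun j => ?_⟩
  split_ifs with hij
  · subst hij
    linarith
  · exact (Finset.sum_eq_zero_iff_of_nonneg fun j _ => hf₀ j).1 hrest j
      (Finset.mem_erase.2 ⟨Ne.symm hij, Finset.mem_univ j⟩)

lemma pairR_eq_dotProduct {d : ℕ} (x y : Fin d → ℝ) : pairR x y = x ⬝ᵥ y := rfl

lemma IsLatticePoint.exists_pairR_eq_int {d : ℕ} {x y : Fin d → ℝ}
    (hx : IsLatticePoint x) (hy : IsLatticePoint y) : ∃ z : ℤ, pairR x y = z := by
  choose zx hzx using hx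
  choose zy hzy using hy
  exact ⟨∑ i, zx i * zy i, by simp [pairR, hzx, hzy]⟩

lemma exists_pairR_eq_ite {d k : ℕ} {K : Set (Fin d → ℝ)} {t : Fin k → Fin d → ℝ}
    (ht : ∀ j, IsLatticePoint (t j) ∧ t j ∈ dualCone K) {v : Fin d → ℝ}
    (hv : IsLatticePoint v) (hvK : v ∈ K) (hv₁ : pairR v (∑ j, t j) = 1) :
    ∃ i, ∀ j, pairR v (t j) = if i = j then 1 else 0 := by
  refine exists_eq_ite_of_sum_eq_one (fun j => (ht j).2 v hvK)
    (fun j => hv.exists_pairR_eq_int (ht j).1) ?_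
  simpa [pairR_eq_dotProduct, dotProduct_sum] using hv₁

theorem stmt0_general {d k : ℕ} (K : Set (Fin d → ℝ)) (deg degVee : Fin d → ℝ)
    (hK : IsGorensteinCone K degVee)
    (t : Fin k → (Fin d → ℝ)) (ht : ∀ i, t i ∈ KvOne K deg)
    (hdec : degVee = ∑ i, t i)
    (Δ : Fin k → Set (Fin d → ℝ))
    (hΔ : ∀ i, Δ i = { x | x ∈ K ∧ ∀ j, pairR x (t j) = if i = j then 1 else 0 }) :
    K = { x | ∃ (n : ℕ) (c : Fin n → ℝ) (p : Fin n → (Fin d → ℝ)),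
      (∀ a, 0 ≤ c a) ∧ (∀ a, ∃ i, p a ∈ Δ i) ∧ x = ∑ a, c a • p a } := by
  obtain ⟨-, ⟨S, hS, hKS⟩, -, -⟩ := hK
  have hK_hull : K = PointedCone.hull ℝ (S : Set (Fin d → ℝ)) := by
    ext x; rw [hKS]; exact PointedCone.mem_hull_finset_iff.symm
  have hΔK : (⋃ i, Δ i) ⊆ K := by
    simp only [Set.iUnion_subset_iff, hΔ]
    exact fun i x hx => hx.1
  have hSΔ : (S : Set (Fin d → ℝ)) ⊆ ⋃ i, Δ i := fun v hv => by
    have hvK : v ∈ K := hK_hull ▸ PointedCone.subset_hull hv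
    obtain ⟨i, hi⟩ := exists_pairR_eq_ite (fun j => ⟨(ht j).1, (ht j).2.1⟩) (hS v hv).1 hvK
      (hdec ▸ (hS v hv).2)
    exact Set.mem_iUnion.2 ⟨i, hΔ i ▸ ⟨hvK, hi⟩⟩
  have hull_eq : PointedCone.hull ℝ (⋃ i, Δ i) = PointedCone.hull ℝ (S : Set (Fin d → ℝ)) :=
    le_antisymm (Submodule.span_le.2 (hK_hull ▸ hΔK)) (Submodule.span_mono hSΔ)
  rw [hK_hull, ← hull_eq]
  ext x
  simp only [SetLike.mem_coe, PointedCone.mem_hull_iff_exists_fin, Set.mem_iUnion,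
    Set.mem_ofPred_eq]

/-- If `(K, K^∨)` is a pair of dual reflexive Gorenstein cones of index `k`
with `deg^∨ = t_1 + ⋯ + t_k`, `t_i ∈ K^∨_(1)`, and `Δ_i = {x ∈ K : ⟨x, t_j⟩ = δ_{ij}}`,
then `K` is exactly the set of all finite nonnegative real linear combinations of
elements of `Δ_1 ∪ ⋯ ∪ Δ_k`. -/
theorem stmt0 {d k : ℕ} (K : Set (Fin d → ℝ)) (deg degVee : Fin d → ℝ)
    (hK : IsGorensteinCone K degVee) (hKv : IsGorensteinCone (dualCone K) deg)
    (hk : pairR deg degVee = (k : ℝ))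
    (t : Fin k → (Fin d → ℝ)) (ht : ∀ i, t i ∈ KvOne K deg)
    (hdec : degVee = ∑ i, t i)
    (Δ : Fin k → Set (Fin d → ℝ))
    (hΔ : ∀ i, Δ i = { x | x ∈ K ∧ ∀ j, pairR x (t j) = if i = j then 1 else 0 }) :
    K = { x | ∃ (n : ℕ) (c : Fin n → ℝ) (p : Fin n → (Fin d → ℝ)),
      (∀ a, 0 ≤ c a) ∧ (∀ a, ∃ i, p a ∈ Δ i) ∧ x = ∑ a, c a • p a } :=
  stmt0_general K deg degVee hK t ht hdec Δ hΔ
end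
end

section
/- Let (K, K^∨) be a pair of dual reflexive Gorenstein cones of index k with deg^∨ = t_1 + ⋯ + t_k where each t_i ∈ K^∨_(1). Then the vectors t_1, …, t_k are linearly independent over ℝ. -/
open scoped BigOperators Pointwise

noncomputable section

lemma IsLatticePoint.exists_dotProduct_eq_intCast {d : ℕ} {x y : Fin d → ℝ}
    (hx : IsLatticePoint x) (hy : IsLatticePoint y) : ∃ z : ℤ, x ⬝ᵥ y = z := by
  choose zx hzx using hx
  choose zy hzy using hy
  exact ⟨∑ i, zx i * zy i, by simp [dotProduct, hzx, hzy]⟩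

lemma exists_mem_dotProduct_ne_zero_of_mem_span {R n : Type*} [CommSemiring R] [Fintype n]
    {s : Set (n → R)} {z y : n → R} (hz : z ∈ Submodule.span R s) (hzy : z ⬝ᵥ y ≠ 0) :
    ∃ x ∈ s, x ⬝ᵥ y ≠ 0 := by
  by_contra! h
  refine hzy (Submodule.span_induction h ?_ ?_ ?_ hz)
  · simp
  · intro a b _ _ ha hb
    rw [add_dotProduct, ha, hb, add_zero]
  · intro r a _ ha
    rw [smul_dotProduct, ha, smul_zero]

lemma LinearIndependent.of_dotProduct_eq_single {R n ι : Type*} [CommSemiring R] [Fintype n]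
    [Fintype ι] [DecidableEq ι] {v t : ι → n → R}
    (h : ∀ i j, v i ⬝ᵥ t j = (Pi.single i 1 : ι → R) j) : LinearIndependent R t := by
  refine LinearIndependent.of_comp (Matrix.mulVecLin (Matrix.of v)) ?_
  convert (Pi.basisFun R ι).linearIndependent using 1
  ext j i
  simp [Matrix.mulVec, h, Pi.single_apply, eq_comm]

lemma eq_single_of_sum_eq_one {ι : Type*} [Fintype ι] [DecidableEq ι] {f : ι → ℝ}
    (hint : ∀ j, ∃ z : ℤ, f j = z) (hf : ∀ j, 0 ≤ f j) (hsum : ∑ j, f j = 1) {i : ι}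
    (hi : f i ≠ 0) : f = Pi.single i 1 := by
  have hi_ge : 1 ≤ f i := by
    obtain ⟨z, hz⟩ := hint i
    rw [hz] at hi ⊢
    have hz_nonneg : (0 : ℤ) ≤ z := by exact_mod_cast hz ▸ hf i
    have hz_ne : z ≠ 0 := by exact_mod_cast hi
    exact_mod_cast (by omega : (1 : ℤ) ≤ z)
  have hrest : ∑ j ∈ Finset.univ.erase i, f j = 1 - f i := by
    rw [Finset.sum_erase_eq_sub (Finset.mem_univ i), hsum]
  have hrest_nonneg := Finset.sum_nonneg fun j (_ : j ∈ Finset.univ.erase i) ↦ hf j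
  ext j
  by_cases hj : j = i
  · subst hj
    rw [Pi.single_eq_same]
    linarith
  · have := Finset.single_le_sum (fun l _ ↦ hf l) (Finset.mem_erase.2 ⟨hj, Finset.mem_univ j⟩)
    rw [Pi.single_eq_of_ne hj]
    linarith [hf j]

section ConeHull

variable {M : Type*} [AddCommMonoid M] [Module ℝ M]

def coneHull (S : Finset M) : Set M :=
  { x | ∃ c : M → ℝ, (∀ v, 0 ≤ c v) ∧ x = ∑ v ∈ S, c v • v }

lemma subset_coneHull [DecidableEq M] (S : Finset M) : (S : Set M) ⊆ coneHull S := fun v hv ↦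
  ⟨Pi.single v 1, fun w ↦ by by_cases h : w = v <;> simp [h],
    by simp [Pi.single_apply, Finset.sum_ite_eq', Finset.mem_coe.1 hv]⟩

lemma span_coneHull [DecidableEq M] (S : Finset M) :
    Submodule.span ℝ (coneHull S) = Submodule.span ℝ S := by
  refine le_antisymm (Submodule.span_le.2 ?_) (Submodule.span_mono (subset_coneHull S))
  rintro _ ⟨c, -, rfl⟩
  exact Submodule.sum_smul_mem _ c fun v hv ↦ Submodule.subset_span hv

end ConeHull

theorem stmt3_general {d k : ℕ} (K : Set (Fin d → ℝ)) (deg degVee : Fin d → ℝ)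
    (hK : IsGorensteinCone K degVee)
    (t : Fin k → (Fin d → ℝ)) (ht : ∀ i, t i ∈ KvOne K deg)
    (hdec : degVee = ∑ i, t i) :
    LinearIndependent ℝ t := by
  obtain ⟨-, ⟨S, hS, hKS⟩, -, hspan⟩ := hK
  change K = coneHull S at hKS
  subst hKS
  rw [span_coneHull] at hspan
  have hdual : ∀ i, ∃ v, ∀ j, v ⬝ᵥ t j = (Pi.single i 1 : Fin k → ℝ) j := by
    intro i
    have hdeg : deg ⬝ᵥ t i ≠ 0 := by rw [← pairR_eq_dotProduct, (ht i).2.2]; exact one_ne_zero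
    obtain ⟨v, hv, hvi⟩ :=
      exists_mem_dotProduct_ne_zero_of_mem_span (hspan ▸ Submodule.mem_top) hdeg
    have hsum : ∑ j, v ⬝ᵥ t j = 1 := by
      rw [← dotProduct_sum, ← hdec, ← pairR_eq_dotProduct, (hS v hv).2]
    refine ⟨v, congrFun (eq_single_of_sum_eq_one (f := fun j ↦ v ⬝ᵥ t j) ?_ ?_ hsum hvi)⟩
    · exact fun j ↦ (hS v hv).1.exists_dotProduct_eq_intCast (ht j).1
    · exact fun j ↦ (ht j).2.1 v (subset_coneHull S hv)
  choose v hv using hdual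
  exact LinearIndependent.of_dotProduct_eq_single hv

/-- With `deg^∨ = t_1 + ⋯ + t_k`, `t_i ∈ K^∨_(1)`, the vectors
`t_1, …, t_k` are linearly independent over `ℝ`. -/
theorem stmt3 {d k : ℕ} (K : Set (Fin d → ℝ)) (deg degVee : Fin d → ℝ)
    (hK : IsGorensteinCone K degVee) (hKv : IsGorensteinCone (dualCone K) deg)
    (hk : pairR deg degVee = (k : ℝ))
    (t : Fin k → (Fin d → ℝ)) (ht : ∀ i, t i ∈ KvOne K deg)
    (hdec : degVee = ∑ i, t i) :
    LinearIndependent ℝ t :=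
  stmt3_general K deg degVee hK t ht hdec
end
end

section
/- Let (K, K^∨) be a pair of dual reflexive Gorenstein cones of index k with deg^∨ = t_1 + ⋯ + t_k where each t_i ∈ K^∨_(1), and set Δ^∨ = {y ∈ K^∨ : ⟨deg, y⟩ = 1}. If q ∈ Δ^∨ and there exist real numbers α_1, …, α_k such that q + α_1 t_1 + ⋯ + α_k t_k is a lattice point, then there exists a lattice point q' ∈ Δ^∨ such that q' − q lies in the real span of {t_1, …, t_k}. -/
open scoped BigOperators Pointwise

noncomputable section

/-!
Write `q + ∑ αᵢ tᵢ` as `p + ∑ ⌊αᵢ⌋ tᵢ` with `p = q + ∑ βᵢ tᵢ`, `βᵢ = fract αᵢ`; then `p` is a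
lattice point, so `⟨deg, p⟩ = 1 + ∑ βᵢ` is an integer and `m = ∑ βᵢ` is a natural number at most
the number of indices with `βᵢ > 0`. Subtract `tᵢ` for `m` such indices `i ∈ I`:
`q' = p - ∑_{i ∈ I} tᵢ` has degree `1`. For a generator `v` of `K` the integers `⟨v, tᵢ⟩ ≥ 0` sum
to `⟨v, deg^∨⟩ = 1`, so `⟨v, q'⟩ ≥ ⟨v, q⟩ + ∑ βᵢ ⟨v, tᵢ⟩ - ∑_{i ∈ I} ⟨v, tᵢ⟩ > -1`, and being an
integer it is `≥ 0`.
-/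

open Finset

section Lattice

variable {d : ℕ}

lemma pairR_add_right (x y z : Fin d → ℝ) : pairR x (y + z) = pairR x y + pairR x z :=
  dotProduct_add x y z

lemma pairR_sub_right (x y z : Fin d → ℝ) : pairR x (y - z) = pairR x y - pairR x z :=
  dotProduct_sub x y z

lemma pairR_smul_right (c : ℝ) (x y : Fin d → ℝ) : pairR x (c • y) = c * pairR x y :=
  dotProduct_smul c x y

lemma pairR_sum_right {ι : Type*} (x : Fin d → ℝ) (s : Finset ι) (f : ι → Fin d → ℝ) :
    pairR x (∑ i ∈ s, f i) = ∑ i ∈ s, pairR x (f i) :=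
  dotProduct_sum x s f

lemma sum_smul_pairR {ι : Type*} (s : Finset ι) (c : ι → ℝ) (f : ι → Fin d → ℝ)
    (y : Fin d → ℝ) : pairR (∑ i ∈ s, c i • f i) y = ∑ i ∈ s, c i * pairR (f i) y := by
  change (∑ i ∈ s, c i • f i) ⬝ᵥ y = ∑ i ∈ s, c i * (f i ⬝ᵥ y)
  simp only [sum_dotProduct, smul_dotProduct, smul_eq_mul]

variable (d) in
def latticeSubgroup : AddSubgroup (Fin d → ℝ) where
  carrier := {x | IsLatticePoint x}
  zero_mem' := fun _ => ⟨0, by simp⟩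
  add_mem' := fun hx hy i => by
    obtain ⟨a, ha⟩ := hx i
    obtain ⟨b, hb⟩ := hy i
    exact ⟨a + b, by simp [ha, hb]⟩
  neg_mem' := fun hx i => by
    obtain ⟨a, ha⟩ := hx i
    exact ⟨-a, by simp [ha]⟩

lemma IsLatticePoint.exists_int_pairR {x y : Fin d → ℝ} (hx : IsLatticePoint x)
    (hy : IsLatticePoint y) : ∃ m : ℤ, pairR x y = m := by
  choose a ha using hx
  choose b hb using hy
  exact ⟨∑ i, a i * b i, by simp [pairR, ha, hb]⟩

lemma exists_nat_eq_of_nonneg_of_eq_int {x : ℝ} (hx : 0 ≤ x) {m : ℤ} (hm : x = m) :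
    ∃ n : ℕ, x = n := by
  lift m to ℕ using by exact_mod_cast hm ▸ hx
  exact ⟨m, by simpa using hm⟩

lemma IsLatticePoint.exists_nat_pairR {x y : Fin d → ℝ} (hx : IsLatticePoint x)
    (hy : IsLatticePoint y) (h : 0 ≤ pairR x y) : ∃ n : ℕ, pairR x y = n :=
  let ⟨_, hm⟩ := hx.exists_int_pairR hy
  exists_nat_eq_of_nonneg_of_eq_int h hm

end Lattice

theorem AddSubgroup.add_sum_fract_smul_mem {V ι : Type*} [AddCommGroup V] [Module ℝ V]
    [Fintype ι] (L : AddSubgroup V) {t : ι → V} (ht : ∀ i, t i ∈ L) {q : V} {α : ι → ℝ}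
    (h : q + ∑ i, α i • t i ∈ L) : q + ∑ i, Int.fract (α i) • t i ∈ L := by
  have hsplit : q + ∑ i, Int.fract (α i) • t i = (q + ∑ i, α i • t i) - ∑ i, ⌊α i⌋ • t i := by
    simp only [Int.fract, sub_smul, sum_sub_distrib, Int.cast_smul_eq_zsmul]
    abel
  rw [hsplit]
  exact L.sub_mem h (L.sum_mem fun i _ => L.zsmul_mem (ht i) _)

theorem exists_finset_pos_card_eq_sum {ι : Type*} [Fintype ι] {β : ι → ℝ}
    (hβ : ∀ i, β i ∈ Set.Ico 0 1) {m : ℕ} (hm : ∑ i, β i = m) :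
    ∃ I : Finset ι, (∀ i ∈ I, 0 < β i) ∧ #I = m := by
  classical
  set P := univ.filter fun i => 0 < β i
  have hsum : ∑ i ∈ P, β i = ∑ i, β i :=
    sum_filter_of_ne fun i _ hne => lt_of_le_of_ne (hβ i).1 hne.symm
  have hmP : (m : ℝ) ≤ #P := by
    calc (m : ℝ) = ∑ i ∈ P, β i := by rw [hsum, hm]
      _ ≤ ∑ _i ∈ P, (1 : ℝ) := sum_le_sum fun i _ => (hβ i).2.le
      _ = #P := by simp
  obtain ⟨I, hIP, hI⟩ := exists_subset_card_eq (s := P) (by exact_mod_cast hmP)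
  exact ⟨I, fun i hi => (mem_filter.mp (hIP hi)).2, hI⟩

theorem neg_one_lt_sum_mul_sub_sum {ι : Type*} [Fintype ι] {n : ι → ℕ} (hn : ∑ i, n i ≤ 1)
    {β : ι → ℝ} (hβ : ∀ i, 0 ≤ β i) {I : Finset ι} (hI : ∀ i ∈ I, 0 < β i) :
    -1 < ∑ i, β i * n i - ∑ i ∈ I, (n i : ℝ) := by
  have hnonneg : ∀ i ∈ univ, 0 ≤ β i * n i := fun i _ => mul_nonneg (hβ i) (Nat.cast_nonneg _)
  by_cases h : ∃ i ∈ I, n i ≠ 0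
  · obtain ⟨i, hiI, hi⟩ := h
    have hIle : ∑ j ∈ I, (n j : ℝ) ≤ 1 := by
      exact_mod_cast (sum_le_sum_of_subset (subset_univ I)).trans hn
    have hβi : β i ≤ ∑ j, β j * n j :=
      (le_mul_of_one_le_right (hβ i) (by exact_mod_cast Nat.one_le_iff_ne_zero.mpr hi)).trans
        (single_le_sum hnonneg (mem_univ i))
    linarith [hI i hiI]
  · push Not at h
    have hI0 : ∑ i ∈ I, (n i : ℝ) = 0 := sum_eq_zero fun i hi => by simp [h i hi]
    rw [hI0]
    linarith [sum_nonneg hnonneg]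

section Cone

variable {d : ℕ}

def finsetCone (S : Finset (Fin d → ℝ)) : Set (Fin d → ℝ) :=
  { x | ∃ c : (Fin d → ℝ) → ℝ, (∀ v, 0 ≤ c v) ∧ x = ∑ v ∈ S, c v • v }

lemma subset_finsetCone (S : Finset (Fin d → ℝ)) : (S : Set (Fin d → ℝ)) ⊆ finsetCone S := by
  classical
  intro v hv
  refine ⟨fun u => if u = v then 1 else 0, fun u => by positivity, ?_⟩
  rw [sum_eq_single_of_mem v hv fun u _ hu => by simp [hu]]
  simp

lemma mem_dualCone_finsetCone_iff {S : Finset (Fin d → ℝ)} {y : Fin d → ℝ} :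
    y ∈ dualCone (finsetCone S) ↔ ∀ v ∈ S, 0 ≤ pairR v y := by
  refine ⟨fun hy v hv => hy v (subset_finsetCone S hv), ?_⟩
  rintro hS _ ⟨c, hc, rfl⟩
  rw [sum_smul_pairR]
  exact sum_nonneg fun v hv => mul_nonneg (hc v) (hS v hv)

theorem sub_sum_mem_dualCone_finsetCone {k : ℕ} {S : Finset (Fin d → ℝ)} {degVee : Fin d → ℝ}
    (hS : ∀ v ∈ S, IsLatticePoint v ∧ pairR v degVee = 1) {t : Fin k → Fin d → ℝ}
    (htlat : ∀ i, IsLatticePoint (t i)) (htK : ∀ i, t i ∈ dualCone (finsetCone S))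
    (hdec : degVee = ∑ i, t i) {q : Fin d → ℝ} (hq : q ∈ dualCone (finsetCone S))
    {β : Fin k → ℝ} (hβ : ∀ i, 0 ≤ β i) {I : Finset (Fin k)} (hI : ∀ i ∈ I, 0 < β i)
    (hlat : IsLatticePoint (q + ∑ i, β i • t i - ∑ i ∈ I, t i)) :
    q + ∑ i, β i • t i - ∑ i ∈ I, t i ∈ dualCone (finsetCone S) := by
  rw [mem_dualCone_finsetCone_iff] at hq ⊢
  intro v hv
  obtain ⟨hvlat, hvdeg⟩ := hS v hv
  choose n hn using fun i => hvlat.exists_nat_pairR (htlat i) (htK i v (subset_finsetCone S hv))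
  have hnsum : ∑ i, n i = 1 := by
    have : ((∑ i, n i : ℕ) : ℝ) = 1 := by
      rw [← hvdeg, hdec, pairR_sum_right]
      simp [hn]
    exact_mod_cast this
  have hval : pairR v (q + ∑ i, β i • t i - ∑ i ∈ I, t i)
      = pairR v q + (∑ i, β i * n i - ∑ i ∈ I, (n i : ℝ)) := by
    simp only [pairR_sub_right, pairR_add_right, pairR_sum_right, pairR_smul_right, hn]
    ring
  obtain ⟨m, hm⟩ := hvlat.exists_int_pairR hlat
  have hgt : (-1 : ℝ) < m := by
    rw [← hm, hval]
    linarith [hq v hv, neg_one_lt_sum_mul_sub_sum hnsum.le hβ hI]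
  have hm0 : (0 : ℤ) ≤ m := by
    have : (-1 : ℤ) < m := by exact_mod_cast hgt
    omega
  rw [hm]
  exact_mod_cast hm0

end Cone

theorem stmt4_general {d k : ℕ} (K : Set (Fin d → ℝ)) (deg degVee : Fin d → ℝ)
    (hK : IsGorensteinCone K degVee) (hKv : IsGorensteinCone (dualCone K) deg)
    (t : Fin k → (Fin d → ℝ)) (ht : ∀ i, t i ∈ KvOne K deg)
    (hdec : degVee = ∑ i, t i)
    (q : Fin d → ℝ) (hq : q ∈ dualCone K ∧ pairR deg q = 1)
    (hlat : ∃ α : Fin k → ℝ, IsLatticePoint (q + ∑ i, α i • t i)) :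
    ∃ q' : Fin d → ℝ, IsLatticePoint q' ∧ q' ∈ dualCone K ∧ pairR deg q' = 1 ∧
      q' - q ∈ Submodule.span ℝ (Set.range t) := by
  obtain ⟨-, ⟨S, hS, rfl⟩, -, -⟩ := hK
  obtain ⟨hdeg, -⟩ := hKv
  obtain ⟨α, hα⟩ := hlat
  set β : Fin k → ℝ := fun i => Int.fract (α i)
  have hβ (i : Fin k) : β i ∈ Set.Ico 0 1 := ⟨Int.fract_nonneg _, Int.fract_lt_one _⟩
  have htlat (i : Fin k) : IsLatticePoint (t i) := (ht i).1
  have hp : IsLatticePoint (q + ∑ i, β i • t i) :=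
    (latticeSubgroup d).add_sum_fract_smul_mem htlat hα
  have hpdeg : pairR deg (q + ∑ i, β i • t i) = 1 + ∑ i, β i := by
    simp [pairR_add_right, pairR_sum_right, pairR_smul_right, hq.2, fun i => (ht i).2.2]
  obtain ⟨m, hm⟩ : ∃ m : ℕ, ∑ i, β i = m := by
    obtain ⟨n, hn⟩ := hdeg.exists_int_pairR hp
    exact exists_nat_eq_of_nonneg_of_eq_int (sum_nonneg fun i _ => (hβ i).1)
      (m := n - 1) (by push_cast; linarith)
  obtain ⟨I, hIpos, hIcard⟩ := exists_finset_pos_card_eq_sum hβ hm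
  have hq'lat : IsLatticePoint (q + ∑ i, β i • t i - ∑ i ∈ I, t i) :=
    (latticeSubgroup d).sub_mem hp ((latticeSubgroup d).sum_mem fun i _ => htlat i)
  refine ⟨_, hq'lat, sub_sum_mem_dualCone_finsetCone hS htlat (fun i => (ht i).2.1) hdec hq.1
    (fun i => (hβ i).1) hIpos hq'lat, ?_, ?_⟩
  · rw [pairR_sub_right, hpdeg, hm, pairR_sum_right]
    simp [fun i => (ht i).2.2, hIcard]
  · rw [add_sub_assoc, add_sub_cancel_left]
    exact sub_mem (sum_mem fun i _ => Submodule.smul_mem _ _ (Submodule.subset_span ⟨i, rfl⟩))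
      (sum_mem fun i _ => Submodule.subset_span ⟨i, rfl⟩)

/-- With `deg^∨ = t_1 + ⋯ + t_k`, `t_i ∈ K^∨_(1)`, and
`Δ^∨ = {y ∈ K^∨ : ⟨deg, y⟩ = 1}`: if `q ∈ Δ^∨` and `q + α_1 t_1 + ⋯ + α_k t_k` is a
lattice point for some reals `α_i`, then there is a lattice point `q' ∈ Δ^∨` with
`q' − q` in the real span of the `t_i`. -/
theorem stmt4 {d k : ℕ} (K : Set (Fin d → ℝ)) (deg degVee : Fin d → ℝ)
    (hK : IsGorensteinCone K degVee) (hKv : IsGorensteinCone (dualCone K) deg)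
    (hk : pairR deg degVee = (k : ℝ))
    (t : Fin k → (Fin d → ℝ)) (ht : ∀ i, t i ∈ KvOne K deg)
    (hdec : degVee = ∑ i, t i)
    (q : Fin d → ℝ) (hq : q ∈ dualCone K ∧ pairR deg q = 1)
    (hlat : ∃ α : Fin k → ℝ, IsLatticePoint (q + ∑ i, α i • t i)) :
    ∃ q' : Fin d → ℝ, IsLatticePoint q' ∧ q' ∈ dualCone K ∧ pairR deg q' = 1 ∧
      q' - q ∈ Submodule.span ℝ (Set.range t) :=
  stmt4_general K deg degVee hK hKv t ht hdec q hq hlat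
end
end

section
/- Let (K, K^∨) be a pair of dual reflexive Gorenstein cones of index k with deg^∨ = t_1 + ⋯ + t_k where each t_i ∈ K^∨_(1), and set Δ^∨ = {y ∈ K^∨ : ⟨deg, y⟩ = 1}. Then the set of lattice points of Δ^∨ that lie in the real span of {t_1, …, t_k} is exactly {t_1, …, t_k}. -/
open scoped BigOperators Pointwise

noncomputable section

lemma pairR_sum_smul_right {d : ℕ} {ι : Type*} [Fintype ι] (x : Fin d → ℝ) (c : ι → ℝ)
    (t : ι → Fin d → ℝ) : pairR x (∑ i, c i • t i) = ∑ i, c i * pairR x (t i) := by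
  simp only [pairR_eq_dotProduct, dotProduct_sum, dotProduct_smul, smul_eq_mul]

lemma IsLatticePoint.exists_natCast_pairR_eq {d : ℕ} {x y : Fin d → ℝ} (hx : IsLatticePoint x)
    (hy : IsLatticePoint y) (h : 0 ≤ pairR x y) : ∃ n : ℕ, pairR x y = n := by
  choose zx hzx using hx
  choose zy hzy using hy
  have hz : pairR x y = ((∑ i, zx i * zy i : ℤ) : ℝ) := by
    push_cast
    exact Finset.sum_congr rfl fun i _ => by rw [hzx, hzy]
  rw [hz] at h ⊢
  obtain ⟨n, hn⟩ := Int.eq_ofNat_of_zero_le (by exact_mod_cast h)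
  exact ⟨n, by rw [hn]; rfl⟩

lemma eq_single_of_natCast_of_sum_eq_one {ι : Type*} [Fintype ι] [DecidableEq ι] {c : ι → ℝ}
    (hc : ∀ i, ∃ n : ℕ, c i = n) (hsum : ∑ i, c i = 1) : ∃ i, c = Pi.single i 1 := by
  have hc0 : ∀ i, 0 ≤ c i := fun i => by obtain ⟨n, hn⟩ := hc i; simp [hn]
  obtain ⟨i, hi⟩ : ∃ i, c i ≠ 0 := by
    by_contra! h
    simp [h] at hsum
  have hi1 : 1 ≤ c i := by
    obtain ⟨n, hn⟩ := hc i
    rw [hn] at hi ⊢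
    exact_mod_cast Nat.one_le_iff_ne_zero.2 (by exact_mod_cast hi)
  have hpair : ∀ j ≠ i, c i + c j ≤ 1 := fun j hj => by
    rw [← hsum, ← Finset.sum_pair hj.symm]
    exact Finset.sum_le_sum_of_subset_of_nonneg (Finset.subset_univ _) fun k _ _ => hc0 k
  refine ⟨i, funext fun j => ?_⟩
  rcases eq_or_ne j i with rfl | hj
  · have := Finset.single_le_sum (fun k _ => hc0 k) (Finset.mem_univ j)
    simp only [Pi.single_eq_same]
    linarith
  · rw [Pi.single_eq_of_ne hj]
    linarith [hpair j hj, hc0 j]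

lemma IsLatticePoint.exists_pairR_eq_single {d : ℕ} {ι : Type*} [Fintype ι] [DecidableEq ι]
    {m : Fin d → ℝ} (hm : IsLatticePoint m) {t : ι → Fin d → ℝ} (ht : ∀ i, IsLatticePoint (t i))
    (hnonneg : ∀ i, 0 ≤ pairR m (t i)) (hsum : pairR m (∑ i, t i) = 1) :
    ∃ i, (fun j => pairR m (t j)) = Pi.single i 1 := by
  refine eq_single_of_natCast_of_sum_eq_one
    (fun i => hm.exists_natCast_pairR_eq (ht i) (hnonneg i)) ?_
  simpa [pairR_eq_dotProduct, dotProduct_sum] using hsum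

lemma mem_range_of_mem_span_of_exists_dual {d : ℕ} {ι : Type*} [Fintype ι] [DecidableEq ι]
    {t : ι → Fin d → ℝ} {deg y : Fin d → ℝ} (hy : y ∈ Submodule.span ℝ (Set.range t))
    (hylat : IsLatticePoint y) (hdeg : pairR deg y = 1) (htdeg : ∀ i, pairR deg (t i) = 1)
    (hdual : ∀ i, ∃ m, IsLatticePoint m ∧ 0 ≤ pairR m y ∧
      (fun j => pairR m (t j)) = Pi.single i 1) :
    y ∈ Set.range t := by
  obtain ⟨c, rfl⟩ := (Submodule.mem_span_range_iff_exists_fun ℝ).1 hy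
  have hcoord : ∀ i, ∃ n : ℕ, c i = n := fun i => by
    obtain ⟨m, hm, hmy, hmt⟩ := hdual i
    have hci : pairR m (∑ j, c j • t j) = c i := by
      simp [pairR_sum_smul_right, congrFun hmt, Pi.single_apply]
    exact hci ▸ hm.exists_natCast_pairR_eq hylat hmy
  have hsum : ∑ i, c i = 1 := by
    simpa [pairR_sum_smul_right, htdeg] using hdeg
  obtain ⟨i, rfl⟩ := eq_single_of_natCast_of_sum_eq_one hcoord hsum
  exact ⟨i, by simp [Pi.single_apply]⟩

lemma exists_mem_pairR_ne_zero_of_span_eq_top {d : ℕ} {S : Set (Fin d → ℝ)}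
    (hS : Submodule.span ℝ S = ⊤) {x z : Fin d → ℝ} (hz : pairR z x ≠ 0) :
    ∃ m ∈ S, pairR m x ≠ 0 := by
  by_contra! h
  have hker : Submodule.span ℝ S ≤ LinearMap.ker ((dotProductBilin ℝ ℝ).flip x) :=
    Submodule.span_le.2 h
  exact hz (hker (hS ▸ Submodule.mem_top))

section Cone

variable {d : ℕ} {K : Set (Fin d → ℝ)} {S : Finset (Fin d → ℝ)}
  (hK : K = { x | ∃ c : (Fin d → ℝ) → ℝ, (∀ v, 0 ≤ c v) ∧ x = ∑ v ∈ S, c v • v })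
include hK

lemma mem_of_eq_cone {v : Fin d → ℝ} (hv : v ∈ S) : v ∈ K := by
  classical
  rw [hK]
  refine ⟨Pi.single v 1, fun w => ?_, ?_⟩
  · by_cases h : w = v <;> simp [h]
  · simp [Pi.single_apply, hv]

lemma span_le_of_eq_cone : Submodule.span ℝ K ≤ Submodule.span ℝ (S : Set (Fin d → ℝ)) := by
  refine Submodule.span_le.2 ?_
  rw [hK]
  rintro _ ⟨c, -, rfl⟩
  exact Submodule.sum_mem _ fun v hv => Submodule.smul_mem _ _ (Submodule.subset_span hv)

end Cone

lemma exists_mem_pairR_eq_single {d : ℕ} {ι : Type*} [Fintype ι] [DecidableEq ι]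
    {S : Set (Fin d → ℝ)} (hS : Submodule.span ℝ S = ⊤) (hSlat : ∀ m ∈ S, IsLatticePoint m)
    {t : ι → Fin d → ℝ} (ht : ∀ i, IsLatticePoint (t i))
    (hnonneg : ∀ m ∈ S, ∀ i, 0 ≤ pairR m (t i)) (hsum : ∀ m ∈ S, pairR m (∑ i, t i) = 1)
    {i : ι} {z : Fin d → ℝ} (hz : pairR z (t i) ≠ 0) :
    ∃ m ∈ S, (fun j => pairR m (t j)) = Pi.single i 1 := by
  obtain ⟨m, hmS, hmi⟩ := exists_mem_pairR_ne_zero_of_span_eq_top hS hz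
  obtain ⟨j, hj⟩ := (hSlat m hmS).exists_pairR_eq_single ht (hnonneg m hmS) (hsum m hmS)
  obtain rfl : j = i := by
    by_contra hji
    exact hmi (by simpa [Pi.single_apply, Ne.symm hji] using congrFun hj i)
  exact ⟨m, hmS, hj⟩

theorem stmt5_general {d k : ℕ} (K : Set (Fin d → ℝ)) (deg degVee : Fin d → ℝ)
    (hK : IsGorensteinCone K degVee)
    (t : Fin k → (Fin d → ℝ)) (ht : ∀ i, t i ∈ KvOne K deg)
    (hdec : degVee = ∑ i, t i) :
    { y : Fin d → ℝ | IsLatticePoint y ∧ y ∈ dualCone K ∧ pairR deg y = 1 ∧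
        y ∈ Submodule.span ℝ (Set.range t) } = Set.range t := by
  obtain ⟨-, ⟨S, hS, hKS⟩, -, hKspan⟩ := hK
  have hSK : ∀ m ∈ S, m ∈ K := fun m => mem_of_eq_cone hKS
  have hSspan : Submodule.span ℝ (S : Set (Fin d → ℝ)) = ⊤ :=
    top_unique (hKspan ▸ span_le_of_eq_cone hKS)
  ext y
  constructor
  · rintro ⟨hylat, hyK, hydeg, hyspan⟩
    refine mem_range_of_mem_span_of_exists_dual hyspan hylat hydeg (fun i => (ht i).2.2)
      fun i => ?_
    obtain ⟨m, hmS, hm⟩ := exists_mem_pairR_eq_single hSspan (fun m hm => (hS m hm).1)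
      (fun i => (ht i).1) (fun m hm i => (ht i).2.1 m (hSK m hm))
      (fun m hm => hdec ▸ (hS m hm).2) (i := i) (z := deg) ((ht i).2.2.symm ▸ one_ne_zero)
    exact ⟨m, (hS m hmS).1, hyK m (hSK m hmS), hm⟩
  · rintro ⟨i, rfl⟩
    exact ⟨(ht i).1, (ht i).2.1, (ht i).2.2, Submodule.subset_span ⟨i, rfl⟩⟩

/-- With `deg^∨ = t_1 + ⋯ + t_k`, `t_i ∈ K^∨_(1)`, the set of lattice
points of `Δ^∨ = {y ∈ K^∨ : ⟨deg, y⟩ = 1}` lying in the real span of `{t_1, …, t_k}`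
is exactly `{t_1, …, t_k}`. -/
theorem stmt5 {d k : ℕ} (K : Set (Fin d → ℝ)) (deg degVee : Fin d → ℝ)
    (hK : IsGorensteinCone K degVee) (hKv : IsGorensteinCone (dualCone K) deg)
    (hk : pairR deg degVee = (k : ℝ))
    (t : Fin k → (Fin d → ℝ)) (ht : ∀ i, t i ∈ KvOne K deg)
    (hdec : degVee = ∑ i, t i) :
    { y : Fin d → ℝ | IsLatticePoint y ∧ y ∈ dualCone K ∧ pairR deg y = 1 ∧
        y ∈ Submodule.span ℝ (Set.range t) } = Set.range t :=
  stmt5_general K deg degVee hK t ht hdec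
end
end
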